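/- Let Ŷ ∈ {−1,+1}^V maximize Σ_{uv∈E} X_uv·Y_u·Y_v over all Y ∈ {−1,+1}^V on the n×n grid graph, let B = {v ∈ V : Ŷ_v ≠ y_v}, and suppose no connected component of G[B] is of type 6. Then the Hamming error |B| is at most Σ_{F ∈ ℱ, F bad} |F|, i.e. the total number of vertices, counted over all bad sets F in the family ℱ. -/

import Mathlib

open Finset
open scoped Classical

def IsSign (x : ℤ) : Prop := x = 1 ∨ x = -1

def gridGraph (n : ℕ) : SimpleGraph (Fin n × Fin n) where
  Adj u v := (u.1 = v.1 ∧ Nat.dist u.2.val v.2.val = 1) ∨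
    (u.2 = v.2 ∧ Nat.dist u.1.val v.1.val = 1)
  symm := by
    constructor
    intro u v h
    rcases h with ⟨h1, h2⟩ | ⟨h1, h2⟩
    · exact Or.inl ⟨h1.symm, by rwa [Nat.dist_comm]⟩
    · exact Or.inr ⟨h1.symm, by rwa [Nat.dist_comm]⟩
  loopless := by
    constructor
    intro u h
    rcases h with ⟨_, h2⟩ | ⟨_, h2⟩ <;> simp [Nat.dist_self] at h2

instance (n : ℕ) : DecidableRel (gridGraph n).Adj := fun u v =>
  inferInstanceAs (Decidable ((u.1 = v.1 ∧ Nat.dist u.2.val v.2.val = 1) ∨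
    (u.2 = v.2 ∧ Nat.dist u.1.val v.1.val = 1)))

def pairProd {V : Type*} (y : V → ℤ) : Sym2 V → ℤ :=
  Sym2.lift ⟨fun u v => y u * y v, fun u v => mul_comm (y u) (y v)⟩

/-- The boundary `δ(S)`: edges of `G` with exactly one endpoint in `S`. -/
noncomputable def bdry {V : Type*} [Fintype V] [DecidableEq V] (G : SimpleGraph V)
    [DecidableRel G.Adj] (S : Finset V) : Finset (Sym2 V) :=
  G.edgeFinset.filter fun e => ∃ u v : V, e = s(u, v) ∧ u ∈ S ∧ v ∉ S

def Maximizes {V : Type*} [Fintype V] [DecidableEq V] (G : SimpleGraph V)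
    [DecidableRel G.Adj] (X : Sym2 V → ℤ) (Yh : V → ℤ) : Prop :=
  (∀ v, IsSign (Yh v)) ∧
  ∀ Y : V → ℤ, (∀ v, IsSign (Y v)) →
    (∑ e ∈ G.edgeFinset, X e * pairProd Y e) ≤ ∑ e ∈ G.edgeFinset, X e * pairProd Yh e

def Type6 (n : ℕ) (S : Finset (Fin n × Fin n)) : Prop :=
  (∃ v ∈ S, v.1.val = 0) ∧ (∃ v ∈ S, v.1.val = n - 1) ∧
  (∃ v ∈ S, v.2.val = 0) ∧ (∃ v ∈ S, v.2.val = n - 1)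

def IsCompOf {V : Type*} [Fintype V] [DecidableEq V] (G : SimpleGraph V)
    (C W : Finset V) : Prop :=
  C ⊆ W ∧ (G.induce (C : Set V)).Connected ∧
  ∀ u ∈ C, ∀ v ∈ W, G.Adj u v → v ∈ C

/-- `F` belongs to the family `ℱ` of nonempty proper subsets of the `n × n` grid such that
both `G[F]` and `G[V ∖ F]` are connected and `F` is not of type 6.  (Connectedness in
Mathlib includes nonemptiness, so `F` is nonempty and `F ⊊ V`.) -/
def InFamily (n : ℕ) (F : Finset (Fin n × Fin n)) : Prop :=
  ((gridGraph n).induce (F : Set (Fin n × Fin n))).Connected ∧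
  ((gridGraph n).induce ((↑F : Set (Fin n × Fin n))ᶜ)).Connected ∧
  ¬ Type6 n F

/-- `S` is bad for observations `X` and ground truth `y`: at least half the edges of
`δ(S)` are inconsistent with the ground truth. -/
def IsBad (n : ℕ) (y : Fin n × Fin n → ℤ) (X : Sym2 (Fin n × Fin n) → ℤ)
    (S : Finset (Fin n × Fin n)) : Prop :=
  (bdry (gridGraph n) S).card ≤
    2 * ((bdry (gridGraph n) S).filter fun e => X e ≠ pairProd y e).card

/-!
Each component `C` of `G[B]` misses some side of the grid. Filling in the holes of `C` (keeping
outside only the component `D` of `V ∖ C` that contains that side) gives a set `F ⊇ C` with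
`G[F]` and `G[D]` connected and `F` missing a side, so `F ∈ ℱ`. Every edge leaving `F` leaves
`C ⊆ B` towards a vertex outside `B`; flipping `Ŷ` on `F` negates exactly the terms of `δ(F)`,
so maximality of `Ŷ` forces at least half of `δ(F)` to be bad. Distinct components give distinct
sets `F`, hence `|B| = ∑ |C| ≤ ∑ |F|`.
-/


namespace SimpleGraph

variable {V : Type*} {G : SimpleGraph V} {S T : Set V} {a u v w x : V}

lemma Preconnected.mem_of_adj_closed (hG : G.Preconnected)
    (hT : ∀ a ∈ T, ∀ b, G.Adj a b → b ∈ T) (hu : u ∈ T) (v : V) : v ∈ T := by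
  induction (reachable_iff_reflTransGen u v).1 (hG u v) with
  | refl => exact hu
  | tail _ hadj ih => exact hT _ ih _ hadj

def ReachableIn (G : SimpleGraph V) (S : Set V) : V → V → Prop :=
  Relation.ReflTransGen fun a b => a ∈ S ∧ b ∈ S ∧ G.Adj a b

namespace ReachableIn

lemma tail (h : G.ReachableIn S u v) (hv : v ∈ S) (hw : w ∈ S) (hadj : G.Adj v w) :
    G.ReachableIn S u w :=
  Relation.ReflTransGen.tail h ⟨hv, hw, hadj⟩

lemma trans (h₁ : G.ReachableIn S u v) (h₂ : G.ReachableIn S v w) : G.ReachableIn S u w :=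
  Relation.ReflTransGen.trans h₁ h₂

lemma symm (h : G.ReachableIn S u v) : G.ReachableIn S v u := by
  induction h with
  | refl => exact .refl
  | tail _ hstep ih => exact .head ⟨hstep.2.1, hstep.1, hstep.2.2.symm⟩ ih

lemma mono (hST : S ⊆ T) (h : G.ReachableIn S u v) : G.ReachableIn T u v :=
  Relation.ReflTransGen.mono (fun _ _ ⟨ha, hb, hadj⟩ => ⟨hST ha, hST hb, hadj⟩) _ _ h

end ReachableIn

lemma reachableIn_of_preconnected_induce (hS : (G.induce S).Preconnected)
    (hu : u ∈ S) (hv : v ∈ S) : G.ReachableIn S u v :=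
  ((reachable_iff_reflTransGen _ _).1 (hS ⟨u, hu⟩ ⟨v, hv⟩)).lift Subtype.val
    fun a b hadj => ⟨a.2, b.2, hadj⟩

lemma connected_induce_of_reachableIn (hv : v ∈ S)
    (h : ∀ u ∈ S, G.ReachableIn S v u) : (G.induce S).Connected := by
  have hreach : ∀ u (hu : u ∈ S), (G.induce S).Reachable ⟨v, hv⟩ ⟨u, hu⟩ := by
    intro u hu
    induction h u hu with
    | refl => rfl
    | tail _ hstep ih => exact (ih hstep.1).trans (Adj.reachable hstep.2.2)
  have : Nonempty S := ⟨⟨v, hv⟩⟩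
  exact ⟨fun a b => (hreach a a.2).symm.trans (hreach b b.2)⟩

lemma reachableIn_of_hom {W : Type*} {H : SimpleGraph W} (f : H →g G) (hH : H.Preconnected)
    (hS : ∀ x, f x ∈ S) (a b : W) : G.ReachableIn S (f a) (f b) :=
  ((reachable_iff_reflTransGen a b).1 (hH a b)).lift f
    fun _ _ hadj => ⟨hS _, hS _, f.map_rel hadj⟩

noncomputable def componentIn (G : SimpleGraph V) (S : Finset V) (v : V) : Finset V :=
  S.filter (G.ReachableIn S v)

variable {S C : Finset V}

lemma mem_componentIn : u ∈ G.componentIn S v ↔ u ∈ S ∧ G.ReachableIn S v u :=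
  Finset.mem_filter

lemma componentIn_subset : G.componentIn S v ⊆ S :=
  Finset.filter_subset _ _

lemma mem_componentIn_self (hv : v ∈ S) : v ∈ G.componentIn S v :=
  mem_componentIn.2 ⟨hv, .refl⟩

lemma mem_componentIn_of_adj (hu : u ∈ G.componentIn S v) (hw : w ∈ S) (hadj : G.Adj u w) :
    w ∈ G.componentIn S v :=
  have ⟨huS, hvu⟩ := mem_componentIn.1 hu
  mem_componentIn.2 ⟨hw, hvu.tail huS hw hadj⟩

lemma reachableIn_componentIn (hu : u ∈ G.componentIn S v) :
    G.ReachableIn (G.componentIn S v) v u := by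
  obtain ⟨huS, hvu⟩ := mem_componentIn.1 hu
  induction hvu with
  | refl => exact .refl
  | tail hvx hstep ih =>
    have hx : _ ∈ G.componentIn S v := mem_componentIn.2 ⟨hstep.1, hvx⟩
    exact (ih hx hstep.1).tail hx hu hstep.2.2

variable [Fintype V] [DecidableEq V]

lemma isCompOf_componentIn (hv : v ∈ S) : IsCompOf G (G.componentIn S v) S :=
  ⟨componentIn_subset,
    connected_induce_of_reachableIn (mem_componentIn_self hv) fun _ => reachableIn_componentIn,
    fun _ hu _ hw hadj => mem_componentIn_of_adj hu hw hadj⟩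

lemma _root_.IsCompOf.eq_componentIn (hC : IsCompOf G C S) (ha : a ∈ C) :
    C = G.componentIn S a := by
  obtain ⟨hCS, hCconn, hCclosed⟩ := hC
  ext x
  refine ⟨fun hx => mem_componentIn.2 ⟨hCS hx, ?_⟩, fun hx => ?_⟩
  · exact (reachableIn_of_preconnected_induce hCconn.preconnected ha hx).mono (by simpa using hCS)
  · induction (mem_componentIn.1 hx).2 with
    | refl => exact ha
    | tail hay hstep ih =>
      exact hCclosed _ (ih (mem_componentIn.2 ⟨hstep.1, hay⟩)) _ hstep.2.1 hstep.2.2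

lemma componentIn_eq_of_mem (hv : v ∈ S) (hu : u ∈ G.componentIn S v) :
    G.componentIn S u = G.componentIn S v :=
  ((isCompOf_componentIn hv).eq_componentIn hu).symm

lemma card_eq_sum_card_componentIn (S : Finset V) :
    S.card = ∑ C ∈ S.image (G.componentIn S), C.card := by
  rw [Finset.card_eq_sum_card_image (G.componentIn S) S]
  refine Finset.sum_congr rfl fun C hC => ?_
  obtain ⟨v, hv, rfl⟩ := Finset.mem_image.1 hC
  congr 1
  ext u
  simp only [Finset.mem_filter]
  exact ⟨fun ⟨hu, huv⟩ => huv ▸ mem_componentIn_self hu,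
    fun hu => ⟨componentIn_subset hu, componentIn_eq_of_mem hv hu⟩⟩

lemma Preconnected.exists_adj_componentIn_compl (hG : G.Preconnected) (hC : C.Nonempty)
    (hu : u ∉ C) : ∃ a ∈ G.componentIn (univ \ C) u, ∃ b ∈ C, G.Adj a b := by
  by_contra! h
  obtain ⟨c, hc⟩ := hC
  have hclosed : ∀ a ∈ (G.componentIn (univ \ C) u : Set V), ∀ b, G.Adj a b →
      b ∈ (G.componentIn (univ \ C) u : Set V) := fun a ha b hab =>
    mem_componentIn_of_adj ha (by simpa using fun hb => h a ha b hb hab) hab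
  have hcu := hG.mem_of_adj_closed hclosed (mem_componentIn_self (by simpa using hu)) c
  exact (Finset.mem_sdiff.1 (componentIn_subset hcu)).2 hc

/-- `C` with its holes filled in, the holes being the components of `G[V ∖ C]` other than
that of `w`. -/
noncomputable def filledIn (G : SimpleGraph V) (C : Finset V) (w : V) : Finset V :=
  univ \ G.componentIn (univ \ C) w

lemma mem_filledIn : u ∈ G.filledIn C w ↔ u ∉ G.componentIn (univ \ C) w := by
  simp [filledIn]

lemma subset_filledIn : C ⊆ G.filledIn C w := fun _ hx =>
  mem_filledIn.2 fun hxw => (Finset.mem_sdiff.1 (componentIn_subset hxw)).2 hx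

lemma mem_of_adj_of_mem_filledIn (hadj : G.Adj u x) (hu : u ∈ G.filledIn C w)
    (hx : x ∉ G.filledIn C w) : u ∈ C := by
  by_contra huC
  rw [mem_filledIn, not_not] at hx
  exact mem_filledIn.1 hu (mem_componentIn_of_adj hx (by simpa using huC) hadj.symm)

lemma Preconnected.exists_adj_compl_filledIn (hG : G.Preconnected) (hC : C.Nonempty)
    (hw : w ∉ C) : ∃ a ∈ C, ∃ b ∉ G.filledIn C w, G.Adj a b :=
  have ⟨b, hb, a, ha, hba⟩ := hG.exists_adj_componentIn_compl hC hw
  ⟨a, ha, b, fun h => mem_filledIn.1 h hb, hba.symm⟩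

lemma connected_induce_compl_filledIn (hw : w ∉ C) :
    (G.induce (G.filledIn C w : Set V)ᶜ).Connected := by
  have hcompl : (G.filledIn C w : Set V)ᶜ = G.componentIn (univ \ C) w := by
    ext; simp [mem_filledIn]
  rw [hcompl]
  exact (isCompOf_componentIn (by simpa using hw)).2.1

lemma Preconnected.connected_induce_filledIn (hG : G.Preconnected)
    (hC : (G.induce (C : Set V)).Connected) (hw : w ∉ C) :
    (G.induce (G.filledIn C w : Set V)).Connected := by
  obtain ⟨⟨v, hv⟩⟩ := hC.nonempty
  refine connected_induce_of_reachableIn (subset_filledIn hv) fun u hu => ?_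
  by_cases huC : u ∈ C
  · exact (reachableIn_of_preconnected_induce hC.preconnected hv huC).mono
      (by simpa using subset_filledIn)
  obtain ⟨a, ha, b, hb, hab⟩ := hG.exists_adj_componentIn_compl ⟨v, hv⟩ huC
  -- the component of `u` in `G[V ∖ C]` is not the one of `w`, so it is filled in
  have hfilled : G.componentIn (univ \ C) u ⊆ G.filledIn C w := fun x hx =>
    mem_filledIn.2 fun hxw => mem_filledIn.1 hu <| by
      rw [← componentIn_eq_of_mem (by simpa using hw) hxw,
        componentIn_eq_of_mem (by simpa using huC) hx]
      exact mem_componentIn_self (by simpa using huC)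
  have hvb : G.ReachableIn (G.filledIn C w) v b :=
    (reachableIn_of_preconnected_induce hC.preconnected hv hb).mono
      (by simpa using subset_filledIn)
  exact (hvb.tail (subset_filledIn hb) (hfilled ha) hab.symm).trans
    ((reachableIn_componentIn ha).symm.mono (by simpa using hfilled))

lemma Preconnected.eq_of_filledIn_eq (hG : G.Preconnected) {C₁ C₂ : Finset V} {w₁ w₂ : V}
    (h₁ : IsCompOf G C₁ S) (h₂ : IsCompOf G C₂ S) (hw₁ : w₁ ∉ C₁)
    (h : G.filledIn C₁ w₁ = G.filledIn C₂ w₂) : C₁ = C₂ := by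
  obtain ⟨⟨c, hc⟩⟩ := h₁.2.1.nonempty
  obtain ⟨a, ha, b, hb, hab⟩ := hG.exists_adj_compl_filledIn ⟨c, hc⟩ hw₁
  rw [h] at hb
  have ha₂ : a ∈ C₂ := mem_of_adj_of_mem_filledIn hab (h ▸ subset_filledIn ha) hb
  rw [h₁.eq_componentIn ha, h₂.eq_componentIn ha₂]

end SimpleGraph

section Sign

variable {s t : ℤ}

lemma IsSign.neg (hs : IsSign s) : IsSign (-s) := by
  rcases hs with rfl | rfl <;> simp [IsSign]

lemma IsSign.mul (hs : IsSign s) (ht : IsSign t) : IsSign (s * t) := by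
  rcases hs with rfl | rfl <;> rcases ht with rfl | rfl <;> simp [IsSign]

lemma IsSign.eq_neg_of_ne (hs : IsSign s) (ht : IsSign t) (h : s ≠ t) : s = -t := by
  rcases hs with rfl | rfl <;> rcases ht with rfl | rfl <;> simp_all

lemma IsSign.mul_eq (hs : IsSign s) (ht : IsSign t) :
    s * t = 1 - 2 * if s ≠ t then 1 else 0 := by
  rcases hs with rfl | rfl <;> rcases ht with rfl | rfl <;> simp

lemma sum_mul_eq_card_sub_two_mul_card_ne {α : Type*} {T : Finset α} {f g : α → ℤ}
    (hf : ∀ e ∈ T, IsSign (f e)) (hg : ∀ e ∈ T, IsSign (g e)) :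
    ∑ e ∈ T, f e * g e = T.card - 2 * (T.filter fun e => f e ≠ g e).card := by
  rw [Finset.sum_congr rfl fun e he => (hf e he).mul_eq (hg e he), Finset.sum_sub_distrib,
    ← Finset.mul_sum, Finset.sum_boole]
  simp

lemma isSign_pairProd {V : Type*} {y : V → ℤ} (hy : ∀ v, IsSign (y v)) (e : Sym2 V) :
    IsSign (pairProd y e) := by
  induction e using Sym2.ind with
  | _ a b => exact (hy a).mul (hy b)

end Sign

section Boundary

variable {V : Type*} [Fintype V] [DecidableEq V] {G : SimpleGraph V} [DecidableRel G.Adj]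
  {F : Finset V} {X : Sym2 V → ℤ} {y Yh : V → ℤ}

lemma mem_bdry_mk {a b : V} :
    s(a, b) ∈ bdry G F ↔ G.Adj a b ∧ (a ∈ F ∧ b ∉ F ∨ b ∈ F ∧ a ∉ F) := by
  simp only [bdry, Finset.mem_filter, SimpleGraph.mem_edgeFinset, SimpleGraph.mem_edgeSet,
    Sym2.eq_iff]
  constructor
  · rintro ⟨hab, u, v, ⟨rfl, rfl⟩ | ⟨rfl, rfl⟩, hu, hv⟩ <;> simp_all
  · rintro ⟨hab, ⟨ha, hb⟩ | ⟨hb, ha⟩⟩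
    exacts [⟨hab, a, b, .inl ⟨rfl, rfl⟩, ha, hb⟩, ⟨hab, b, a, .inr ⟨rfl, rfl⟩, hb, ha⟩]

lemma pairProd_flip_eq {e : Sym2 V} (he : e ∈ G.edgeFinset) :
    pairProd (fun u => if u ∈ F then -Yh u else Yh u) e =
      if e ∈ bdry G F then -pairProd Yh e else pairProd Yh e := by
  induction e using Sym2.ind with
  | _ a b =>
    have hab : G.Adj a b := SimpleGraph.mem_edgeFinset.1 he
    by_cases ha : a ∈ F <;> by_cases hb : b ∈ F <;> simp [pairProd, mem_bdry_mk, hab, ha, hb]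

/-- Flipping a maximizer on `F` changes the objective by `-2 ∑_{e ∈ δ(F)} X e * Ŷ e`. -/
lemma Maximizes.sum_bdry_nonneg (hmax : Maximizes G X Yh) (F : Finset V) :
    0 ≤ ∑ e ∈ bdry G F, X e * pairProd Yh e := by
  set Y' : V → ℤ := fun u => if u ∈ F then -Yh u else Yh u
  have hY' : ∀ v, IsSign (Y' v) := fun v => by
    simp only [Y']
    split_ifs
    exacts [(hmax.1 v).neg, hmax.1 v]
  have hflip : ∑ e ∈ G.edgeFinset, X e * pairProd Y' e = ∑ e ∈ G.edgeFinset, X e * pairProd Yh e -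
      2 * ∑ e ∈ bdry G F, X e * pairProd Yh e := by
    have hinter : G.edgeFinset ∩ bdry G F = bdry G F :=
      Finset.inter_eq_right.2 (Finset.filter_subset _ _)
    rw [← hinter, ← Finset.sum_ite_mem, Finset.mul_sum, ← Finset.sum_sub_distrib]
    refine Finset.sum_congr rfl fun e he => ?_
    rw [pairProd_flip_eq he]
    split_ifs <;> ring
  linarith [hmax.2 Y' hY']

lemma card_bdry_le_two_mul_card_bad (hy : ∀ v, IsSign (y v))
    (hX : ∀ e ∈ G.edgeFinset, IsSign (X e)) (hmax : Maximizes G X Yh)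
    (hF : ∀ a b, G.Adj a b → a ∈ F → b ∉ F → Yh a = -y a ∧ Yh b = y b) :
    (bdry G F).card ≤ 2 * ((bdry G F).filter fun e => X e ≠ pairProd y e).card := by
  have hbdry : bdry G F ⊆ G.edgeFinset := Finset.filter_subset _ _
  have hflip : ∀ e ∈ bdry G F, X e * pairProd Yh e = -(X e * pairProd y e) := by
    intro e he
    obtain ⟨heE, a, b, rfl, ha, hb⟩ := Finset.mem_filter.1 he
    obtain ⟨hYa, hYb⟩ := hF a b (SimpleGraph.mem_edgeFinset.1 heE) ha hb
    simp only [pairProd, Sym2.lift_mk, hYa, hYb]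
    ring
  have hsum := hmax.sum_bdry_nonneg F
  rw [Finset.sum_congr rfl hflip, Finset.sum_neg_distrib,
    sum_mul_eq_card_sub_two_mul_card_ne (fun e he => hX e (hbdry he))
      (fun e _ => isSign_pairProd hy e)] at hsum
  omega

end Boundary

section Grid

open SimpleGraph

variable {n : ℕ}

lemma gridGraph_eq_boxProd (n : ℕ) : gridGraph n = pathGraph n □ pathGraph n := by
  ext u v
  simp only [gridGraph, boxProd_adj, pathGraph_adj, Nat.dist, Fin.ext_iff]
  omega

lemma gridGraph_preconnected (n : ℕ) : (gridGraph n).Preconnected := by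
  rw [gridGraph_eq_boxProd]
  exact (pathGraph_preconnected n).boxProd (pathGraph_preconnected n)

def IsSide (n : ℕ) (L : Finset (Fin n × Fin n)) : Prop :=
  ∃ c : Fin n, (c.val = 0 ∨ c.val = n - 1) ∧
    (L = univ.filter (fun v => v.1 = c) ∨ L = univ.filter (fun v => v.2 = c))

lemma exists_isSide_disjoint (hn : 0 < n) {C : Finset (Fin n × Fin n)} (hC : ¬ Type6 n C) :
    ∃ L, IsSide n L ∧ Disjoint C L := by
  rw [Type6, not_and_or, not_and_or, not_and_or] at hC
  have hlast : n - 1 < n := by omega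
  rcases hC with h | h | h | h
  · exact ⟨_, ⟨⟨0, hn⟩, .inl rfl, .inl rfl⟩,
      disjoint_left.2 fun v hv hvL => h ⟨v, hv, by simpa [Fin.ext_iff] using hvL⟩⟩
  · exact ⟨_, ⟨⟨n - 1, hlast⟩, .inr rfl, .inl rfl⟩,
      disjoint_left.2 fun v hv hvL => h ⟨v, hv, by simpa [Fin.ext_iff] using hvL⟩⟩
  · exact ⟨_, ⟨⟨0, hn⟩, .inl rfl, .inr rfl⟩,
      disjoint_left.2 fun v hv hvL => h ⟨v, hv, by simpa [Fin.ext_iff] using hvL⟩⟩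
  · exact ⟨_, ⟨⟨n - 1, hlast⟩, .inr rfl, .inr rfl⟩,
      disjoint_left.2 fun v hv hvL => h ⟨v, hv, by simpa [Fin.ext_iff] using hvL⟩⟩

namespace IsSide

variable {L : Finset (Fin n × Fin n)}

lemma nonempty (hL : IsSide n L) : L.Nonempty := by
  obtain ⟨c, -, rfl | rfl⟩ := hL <;> exact ⟨(c, c), by simp⟩

lemma not_type6_of_disjoint (hL : IsSide n L) {F : Finset (Fin n × Fin n)} (hFL : Disjoint F L) :
    ¬ Type6 n F := by
  obtain ⟨c, hc, rfl | rfl⟩ := hL <;>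
  rintro ⟨⟨a, ha, ha'⟩, ⟨b, hb, hb'⟩, ⟨d, hd, hd'⟩, ⟨e, he, he'⟩⟩ <;>
  rcases hc with hc | hc
  exacts [disjoint_left.1 hFL ha (by simp [Fin.ext_iff]; omega),
    disjoint_left.1 hFL hb (by simp [Fin.ext_iff]; omega),
    disjoint_left.1 hFL hd (by simp [Fin.ext_iff]; omega),
    disjoint_left.1 hFL he (by simp [Fin.ext_iff]; omega)]

lemma reachableIn (hL : IsSide n L) {S : Set (Fin n × Fin n)} (hLS : ↑L ⊆ S) {u v}
    (hu : u ∈ L) (hv : v ∈ L) : (gridGraph n).ReachableIn S u v := by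
  rw [gridGraph_eq_boxProd]
  obtain ⟨a, i⟩ := u
  obtain ⟨b, j⟩ := v
  obtain ⟨c, -, rfl | rfl⟩ := hL <;> simp only [mem_filter, mem_univ, true_and] at hu hv <;>
    subst hu hv
  exacts [reachableIn_of_hom (boxProdRight _ _ _).toHom (pathGraph_preconnected n)
      (fun _ => hLS (by simp)) _ _,
    reachableIn_of_hom (boxProdLeft _ _ _).toHom (pathGraph_preconnected n)
      (fun _ => hLS (by simp)) _ _]

end IsSide

lemma exists_inFamily_filledIn {C : Finset (Fin n × Fin n)}
    (hC : ((gridGraph n).induce (C : Set (Fin n × Fin n))).Connected) (hC6 : ¬ Type6 n C) :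
    ∃ w ∉ C, InFamily n ((gridGraph n).filledIn C w) := by
  obtain ⟨⟨v, -⟩⟩ := hC.nonempty
  obtain ⟨L, hL, hCL⟩ := exists_isSide_disjoint v.1.pos hC6
  obtain ⟨w, hw⟩ := hL.nonempty
  have hwC : w ∉ C := disjoint_right.1 hCL hw
  have hLS : (L : Set (Fin n × Fin n)) ⊆ ↑(univ \ C) := by
    intro x hx
    simpa using disjoint_right.1 hCL hx
  have hFL : Disjoint ((gridGraph n).filledIn C w) L := disjoint_right.2 fun x hx hxF =>
    mem_filledIn.1 hxF (mem_componentIn.2 ⟨hLS hx, hL.reachableIn hLS hw hx⟩)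
  exact ⟨w, hwC, (gridGraph_preconnected n).connected_induce_filledIn hC hwC,
    connected_induce_compl_filledIn hwC, hL.not_type6_of_disjoint hFL⟩

lemma isBad_filledIn {y : Fin n × Fin n → ℤ} (hy : ∀ v, IsSign (y v))
    {X : Sym2 (Fin n × Fin n) → ℤ} (hX : ∀ e ∈ (gridGraph n).edgeFinset, IsSign (X e))
    {Yh : Fin n × Fin n → ℤ} (hmax : Maximizes (gridGraph n) X Yh)
    {C : Finset (Fin n × Fin n)} (hC : IsCompOf (gridGraph n) C (univ.filter fun v => Yh v ≠ y v))
    (w : Fin n × Fin n) : IsBad n y X ((gridGraph n).filledIn C w) := by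
  refine card_bdry_le_two_mul_card_bad hy hX hmax fun a b hab ha hb => ?_
  have haC : a ∈ C := mem_of_adj_of_mem_filledIn hab ha hb
  have hbC : b ∉ C := fun hbC => hb (subset_filledIn hbC)
  have haB := hC.1 haC
  have hbB : b ∉ univ.filter fun v => Yh v ≠ y v := fun hbB => hbC (hC.2.2 a haC b hbB hab)
  simp only [mem_filter, mem_univ, true_and, not_not] at haB hbB
  exact ⟨(hmax.1 a).eq_neg_of_ne (hy a) haB, hbB⟩

end Grid

/-- if `Ŷ` maximizes the edge agreement, `B` is the set of mislabeled
vertices, and no connected component of `G[B]` is of type 6, then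
`|B| ≤ ∑_{F ∈ ℱ, F bad} |F|`. -/
theorem hamming_le_sum_bad_filledIn (n : ℕ)
    (y : Fin n × Fin n → ℤ) (hy : ∀ v, IsSign (y v))
    (X : Sym2 (Fin n × Fin n) → ℤ) (hX : ∀ e ∈ (gridGraph n).edgeFinset, IsSign (X e))
    (Yh : Fin n × Fin n → ℤ) (hmax : Maximizes (gridGraph n) X Yh)
    (B : Finset (Fin n × Fin n)) (hB : B = univ.filter fun v => Yh v ≠ y v)
    (hno6 : ∀ C, IsCompOf (gridGraph n) C B → ¬ Type6 n C) :
    B.card ≤ ∑ F ∈ univ.filter (fun F : Finset (Fin n × Fin n) =>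
        InFamily n F ∧ IsBad n y X F), F.card := by
  rcases B.eq_empty_or_nonempty with rfl | ⟨v, -⟩
  · simp
  -- `choose!` needs the vertex type to be inhabited
  have : Nonempty (Fin n × Fin n) := ⟨v⟩
  set G := gridGraph n
  set 𝒞 := B.image (G.componentIn B)
  have hcomp : ∀ C ∈ 𝒞, IsCompOf G C B := by
    simp only [𝒞, mem_image]
    rintro _ ⟨v, hv, rfl⟩
    exact SimpleGraph.isCompOf_componentIn hv
  choose! w hwC hfam using fun C hC =>
    exists_inFamily_filledIn (hcomp C hC).2.1 (hno6 C (hcomp C hC))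
  calc B.card = ∑ C ∈ 𝒞, C.card := SimpleGraph.card_eq_sum_card_componentIn B
    _ ≤ ∑ C ∈ 𝒞, (G.filledIn C (w C)).card :=
      sum_le_sum fun _ _ => card_le_card SimpleGraph.subset_filledIn
    _ = ∑ F ∈ 𝒞.image fun C => G.filledIn C (w C), F.card :=
      (sum_image fun C₁ h₁ C₂ h₂ h => (gridGraph_preconnected n).eq_of_filledIn_eq
        (hcomp C₁ h₁) (hcomp C₂ h₂) (hwC C₁ h₁) h).symm
    _ ≤ _ := by
      refine sum_le_sum_of_subset fun F hF => ?_
      obtain ⟨C, hC, rfl⟩ := mem_image.1 hF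
      exact mem_filter.2 ⟨mem_univ _, hfam C hC, isBad_filledIn hy hX hmax (hB ▸ hcomp C hC) _⟩
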